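/- Let $\Omega$ be a symmetric positive definite $p \times p$ matrix with unit diagonal, let $\mathcal{K}_p = \{(r,s) : 1 \leq r \leq s \leq p\}$, and let $Q$ be the $|\mathcal{K}_p| \times |\mathcal{K}_p|$ matrix with entries $Q_{(r,s),(r',s')} = (\Omega_{rr'}\Omega_{ss'} + \Omega_{rs'}\Omega_{r's}) / \sqrt{(1+\Omega_{rs}^2)(1+\Omega_{r's'}^2)}$. Then the $\ell^1 \to \ell^1$ operator norm of $Q$ satisfies $\|Q\|_{1 \to 1} \leq 2 \|\Omega\|_{1 \to 1}^2$, where $\|M\|_{1\to 1} = \max_j \sum_i |M_{ij}|$. -/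
import Mathlib


open Matrix

/-- The `ℓ¹ → ℓ¹` operator norm (maximum absolute column sum) of the covariance matrix
`Q` of the standardized Wishart entries, indexed by the upper-triangular index set
`𝒦_p = {(r,s) : r ≤ s}`, is at most `2 ‖Ω‖_{1→1}²`. -/
theorem stmt_5 (p : ℕ) (Om : Matrix (Fin p) (Fin p) ℝ)
    (hsym : Om.IsSymm) (hpd : Om.PosDef) (hdiag : ∀ i, Om i i = 1)
    (Q : {x : Fin p × Fin p // x.1 ≤ x.2} → {x : Fin p × Fin p // x.1 ≤ x.2} → ℝ)
    (hQ : ∀ k k' : {x : Fin p × Fin p // x.1 ≤ x.2},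
      Q k k' = (Om k.1.1 k'.1.1 * Om k.1.2 k'.1.2 + Om k.1.1 k'.1.2 * Om k'.1.1 k.1.2) /
        Real.sqrt ((1 + Om k.1.1 k.1.2 ^ 2) * (1 + Om k'.1.1 k'.1.2 ^ 2))) :
    (⨆ k : {x : Fin p × Fin p // x.1 ≤ x.2}, ∑ k', |Q k' k|) ≤
      2 * (⨆ j : Fin p, ∑ i, |Om i j|) ^ 2 := by
  set M := ⨆ j : Fin p, ∑ i, |Om i j| with hMdef
  rcases isEmpty_or_nonempty (Fin p) with hp | hp
  · have h1 : IsEmpty {x : Fin p × Fin p // x.1 ≤ x.2} :=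
      ⟨fun x => hp.elim x.1.1⟩
    rw [Real.iSup_of_isEmpty, hMdef, Real.iSup_of_isEmpty]
    norm_num
  have hM : ∀ j : Fin p, ∑ i, |Om i j| ≤ M := fun j =>
    le_ciSup (f := fun j => ∑ i, |Om i j|) (Set.Finite.bddAbove (Set.finite_range _)) j
  have hM0 : 0 ≤ M := le_trans (Finset.sum_nonneg fun i _ => abs_nonneg _)
    (hM (Classical.arbitrary _))
  have hne : Nonempty {x : Fin p × Fin p // x.1 ≤ x.2} :=
    ⟨⟨(Classical.arbitrary _, Classical.arbitrary _), le_refl _⟩⟩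
  apply ciSup_le
  rintro ⟨⟨r, s⟩, hrs⟩
  -- pointwise bound
  have key : ∀ k' : {x : Fin p × Fin p // x.1 ≤ x.2},
      |Q k' ⟨(r, s), hrs⟩| ≤
        |Om k'.1.1 r| * |Om k'.1.2 s| + |Om k'.1.1 s| * |Om r k'.1.2| := by
    rintro ⟨⟨r', s'⟩, hrs'⟩
    rw [hQ]
    simp only
    have hD : 1 ≤ Real.sqrt ((1 + Om r' s' ^ 2) * (1 + Om r s ^ 2)) := by
      rw [Real.one_le_sqrt]
      nlinarith [sq_nonneg (Om r' s'), sq_nonneg (Om r s), sq_nonneg (Om r' s' * Om r s)]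
    calc |(Om r' r * Om s' s + Om r' s * Om r s') /
          Real.sqrt ((1 + Om r' s' ^ 2) * (1 + Om r s ^ 2))|
        = |Om r' r * Om s' s + Om r' s * Om r s'| /
          Real.sqrt ((1 + Om r' s' ^ 2) * (1 + Om r s ^ 2)) := by
          rw [abs_div, abs_of_nonneg (Real.sqrt_nonneg _)]
      _ ≤ |Om r' r * Om s' s + Om r' s * Om r s'| := by
          apply div_le_self (abs_nonneg _) hD
      _ ≤ |Om r' r * Om s' s| + |Om r' s * Om r s'| := abs_add_le _ _
      _ = |Om r' r| * |Om s' s| + |Om r' s| * |Om r s'| := by rw [abs_mul, abs_mul]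
  have hsumle : ∑ k' : {x : Fin p × Fin p // x.1 ≤ x.2}, |Q k' ⟨(r, s), hrs⟩| ≤
      ∑ x : Fin p × Fin p, (|Om x.1 r| * |Om x.2 s| + |Om x.1 s| * |Om r x.2|) := by
    calc ∑ k' : {x : Fin p × Fin p // x.1 ≤ x.2}, |Q k' ⟨(r, s), hrs⟩|
        ≤ ∑ k' : {x : Fin p × Fin p // x.1 ≤ x.2},
            (|Om k'.1.1 r| * |Om k'.1.2 s| + |Om k'.1.1 s| * |Om r k'.1.2|) :=
          Finset.sum_le_sum fun k' _ => key k'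
      _ = ∑ x ∈ Finset.univ.filter (fun x : Fin p × Fin p => x.1 ≤ x.2),
            (|Om x.1 r| * |Om x.2 s| + |Om x.1 s| * |Om r x.2|) := by
          exact (Finset.sum_subtype (p := fun x : Fin p × Fin p => x.1 ≤ x.2)
            (Finset.univ.filter (fun x : Fin p × Fin p => x.1 ≤ x.2))
            (fun x => by simp)
            (fun x => |Om x.1 r| * |Om x.2 s| + |Om x.1 s| * |Om r x.2|)).symm
      _ ≤ ∑ x : Fin p × Fin p, (|Om x.1 r| * |Om x.2 s| + |Om x.1 s| * |Om r x.2|) :=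
          Finset.sum_le_sum_of_subset_of_nonneg (Finset.filter_subset _ _)
            (fun x _ _ => by positivity)
  have hprod : ∑ x : Fin p × Fin p, (|Om x.1 r| * |Om x.2 s| + |Om x.1 s| * |Om r x.2|) =
      (∑ a, |Om a r|) * (∑ b, |Om b s|) + (∑ a, |Om a s|) * (∑ b, |Om b r|) := by
    have hs : ∀ b, Om r b = Om b r := fun b => (hsym.apply b r).symm ▸ rfl
    simp_rw [fun b => congrArg abs (hs b)]
    rw [Fintype.sum_prod_type]
    simp_rw [Finset.sum_add_distrib, ← Finset.mul_sum, ← Finset.sum_mul]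
  calc ∑ k' : {x : Fin p × Fin p // x.1 ≤ x.2}, |Q k' ⟨(r, s), hrs⟩|
      ≤ (∑ a, |Om a r|) * (∑ b, |Om b s|) + (∑ a, |Om a s|) * (∑ b, |Om b r|) := by
        rw [← hprod]; exact hsumle
    _ ≤ M * M + M * M := by
        gcongr <;> first
          | exact Finset.sum_nonneg fun i _ => abs_nonneg _
          | exact hM _
    _ = 2 * M ^ 2 := by ring
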